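/- arXiv:1706.03605 — 2 statements merged into one kernel-verified Lean document; each statement's English description precedes it below -/
import Mathlib

section
/- In a C-system, if X ≥ Y ≥ Γ and f : Γ' → Γ is a morphism, then f*(X) = q(f,Y)*(X) and q(f,X) = q(q(f,Y),X). -/
universe u v

/-- The underlying data of a C-system (contextual category): a category with a
length function, a father function, a final object `pt` of length `0`, and the
canonical projections `proj X : X ⟶ ft X`.  Composition is written in
diagrammatic order: `comp f g` is "first `f`, then `g`". -/
structure PreCSystem where
  Ob : Type u
  Hom : Ob → Ob → Type v
  id : ∀ X : Ob, Hom X X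
  comp : ∀ {X Y Z : Ob}, Hom X Y → Hom Y Z → Hom X Z
  id_comp : ∀ {X Y : Ob} (f : Hom X Y), comp (id X) f = f
  comp_id : ∀ {X Y : Ob} (f : Hom X Y), comp f (id Y) = f
  assoc : ∀ {X Y Z W : Ob} (f : Hom X Y) (g : Hom Y Z) (h : Hom Z W),
    comp (comp f g) h = comp f (comp g h)
  l : Ob → ℕ
  ft : Ob → Ob
  pt : Ob
  l_pt : l pt = 0
  pt_unique : ∀ X : Ob, l X = 0 → X = pt
  l_ft : ∀ X : Ob, l (ft X) = l X - 1
  ft_pt : ft pt = pt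
  proj : ∀ X : Ob, Hom X (ft X)
  toPt : ∀ X : Ob, Hom X pt
  toPt_unique : ∀ (X : Ob) (f : Hom X pt), f = toPt X

namespace PreCSystem

/-- `X` is over `Y` (written `X ≥ Y` in the paper). -/
def Over (C : PreCSystem) (X Y : C.Ob) : Prop :=
  C.l Y ≤ C.l X ∧ C.ft^[C.l X - C.l Y] X = Y

/-- `X` is above `Y` (written `X > Y` in the paper). -/
def Above (C : PreCSystem) (X Y : C.Ob) : Prop :=
  C.Over X Y ∧ C.l Y < C.l X

end PreCSystem

/-- A C-system: the data of a `PreCSystem` together with the iterated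
projections `pp X Y : X ⟶ Y` (for `X ≥ Y`), the iterated base change
`star f X` (`f*(X)`) and `qq f X` (`q(f,X)`) characterized by their
recursive defining equations, the one-step axioms on lengths and fathers,
and the axiom that the one-step canonical squares are pullbacks. -/
structure CSystem extends PreCSystem where
  pp : ∀ (X Y : Ob), toPreCSystem.Over X Y → Hom X Y
  pp_refl : ∀ (X : Ob) (h : toPreCSystem.Over X X), pp X X h = id X
  pp_step : ∀ (X Y : Ob) (h : toPreCSystem.Over X Y), l Y < l X →
    ∀ h' : toPreCSystem.Over (ft X) Y, pp X Y h = comp (proj X) (pp (ft X) Y h')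
  star : ∀ {Γ' Γ : Ob}, Hom Γ' Γ → ∀ X : Ob, toPreCSystem.Over X Γ → Ob
  qq : ∀ {Γ' Γ : Ob} (f : Hom Γ' Γ) (X : Ob) (h : toPreCSystem.Over X Γ),
    Hom (star f X h) X
  star_refl : ∀ {Γ' Γ : Ob} (f : Hom Γ' Γ) (h : toPreCSystem.Over Γ Γ),
    star f Γ h = Γ'
  qq_refl : ∀ {Γ' Γ : Ob} (f : Hom Γ' Γ) (h : toPreCSystem.Over Γ Γ),
    HEq (qq f Γ h) f
  star_step : ∀ {Γ' Γ : Ob} (f : Hom Γ' Γ) (X : Ob) (h : toPreCSystem.Over X Γ),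
    l Γ < l X → ∀ (hft : toPreCSystem.Over (ft X) Γ) (h1 : toPreCSystem.Over X (ft X)),
    star f X h = star (qq f (ft X) hft) X h1
  qq_step : ∀ {Γ' Γ : Ob} (f : Hom Γ' Γ) (X : Ob) (h : toPreCSystem.Over X Γ),
    l Γ < l X → ∀ (hft : toPreCSystem.Over (ft X) Γ) (h1 : toPreCSystem.Over X (ft X)),
    HEq (qq f X h) (qq (qq f (ft X) hft) X h1)
  l_star_step : ∀ {Γ' Γ : Ob} (f : Hom Γ' Γ) (X : Ob) (h : toPreCSystem.Over X Γ),
    l X = l Γ + 1 → l (star f X h) = l Γ' + 1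
  ft_star_step : ∀ {Γ' Γ : Ob} (f : Hom Γ' Γ) (X : Ob) (h : toPreCSystem.Over X Γ),
    l X = l Γ + 1 → ft (star f X h) = Γ'
  canonical_comm : ∀ {Γ' Γ : Ob} (f : Hom Γ' Γ) (X : Ob) (h : toPreCSystem.Over X Γ),
    l X = l Γ + 1 → ∀ h' : toPreCSystem.Over (star f X h) Γ',
    comp (qq f X h) (pp X Γ h) = comp (pp (star f X h) Γ' h') f
  canonical_pullback : ∀ {Γ' Γ : Ob} (f : Hom Γ' Γ) (X : Ob) (h : toPreCSystem.Over X Γ),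
    l X = l Γ + 1 → ∀ h' : toPreCSystem.Over (star f X h) Γ',
    ∀ {W : Ob} (u : Hom W X) (v : Hom W Γ'),
      comp u (pp X Γ h) = comp v f →
      ∃! w : Hom W (star f X h),
        comp w (qq f X h) = u ∧ comp w (pp (star f X h) Γ' h') = v

namespace CSystem

abbrev Over (C : CSystem) (X Y : C.Ob) : Prop := C.toPreCSystem.Over X Y

abbrev Above (C : CSystem) (X Y : C.Ob) : Prop := C.toPreCSystem.Above X Y

/-- `a : X ⟶ Y` is a morphism over `Γ`: `X, Y ≥ Γ` and `a ∘ p(Y,Γ) = p(X,Γ)`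
(diagrammatic order). -/
def MorOver (C : CSystem) {X Y : C.Ob} (a : C.Hom X Y) (Γ : C.Ob) : Prop :=
  ∃ (hX : C.Over X Γ) (hY : C.Over Y Γ), C.comp a (C.pp Y Γ hY) = C.pp X Γ hX

/-- The canonical fiber product `X ×_Γ Y := p(X,Γ)*(Y)`. -/
def prod (C : CSystem) (X Y Γ : C.Ob) (hX : C.Over X Γ) (hY : C.Over Y Γ) : C.Ob :=
  C.star (C.pp X Γ hX) Y hY

/-- A square in a C-system (with given cone `px : P ⟶ X`, `py : P ⟶ Y` over
`f : X ⟶ Z`, `g : Y ⟶ Z`) is a pullback. -/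
def IsPullback (C : CSystem) {P X Y Z : C.Ob} (px : C.Hom P X) (py : C.Hom P Y)
    (f : C.Hom X Z) (g : C.Hom Y Z) : Prop :=
  C.comp px f = C.comp py g ∧
  ∀ {W : C.Ob} (u : C.Hom W X) (v : C.Hom W Y), C.comp u f = C.comp v g →
    ∃! w : C.Hom W P, C.comp w px = u ∧ C.comp w py = v

end CSystem

private lemma star_qq_congr (C : CSystem) {Γ'₁ Γ'₂ Γ : C.Ob} (e : Γ'₁ = Γ'₂)
    (f₁ : C.Hom Γ'₁ Γ) (f₂ : C.Hom Γ'₂ Γ) (hf : HEq f₁ f₂) (X : C.Ob)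
    (h : C.Over X Γ) :
    C.star f₁ X h = C.star f₂ X h ∧ HEq (C.qq f₁ X h) (C.qq f₂ X h) := by
  subst e; cases hf; exact ⟨rfl, HEq.rfl⟩

private lemma stmt10_aux (C : CSystem) {Γ' Γ : C.Ob} (f : C.Hom Γ' Γ) (Y : C.Ob)
    (hYΓ : C.Over Y Γ) :
    ∀ n (X : C.Ob), C.l X = C.l Y + n → ∀ (hXY : C.Over X Y) (hXΓ : C.Over X Γ),
    C.star f X hXΓ = C.star (C.qq f Y hYΓ) X hXY ∧
    HEq (C.qq f X hXΓ) (C.qq (C.qq f Y hYΓ) X hXY) := by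
  intro n
  induction n with
  | zero =>
    intro X hl hXY hXΓ
    have hXeqY : X = Y := by
      have h2 := hXY.2
      rw [show C.l X - C.l Y = 0 by omega, Function.iterate_zero_apply] at h2
      exact h2
    subst hXeqY
    exact ⟨(C.star_refl (C.qq f X hYΓ) hXY).symm,
      ((C.qq_refl (C.qq f X hYΓ) hXY).symm)⟩
  | succ n ih =>
    intro X hl hXY hXΓ
    have hlY : C.l Y < C.l X := by omega
    have hlΓ : C.l Γ < C.l X := lt_of_le_of_lt hYΓ.1 hlY
    have hlft : C.l (C.ft X) = C.l X - 1 := C.l_ft X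
    have hftY : C.Over (C.ft X) Y := by
      refine ⟨by omega, ?_⟩
      have h2 := hXY.2
      rw [show C.l X - C.l Y = n + 1 by omega, Function.iterate_succ_apply] at h2
      rw [show C.l (C.ft X) - C.l Y = n by omega]
      exact h2
    have hftΓ : C.Over (C.ft X) Γ := by
      refine ⟨by omega, ?_⟩
      have h2 := hXΓ.2
      have hd : C.l X - C.l Γ = (C.l (C.ft X) - C.l Γ) + 1 := by omega
      rw [hd, Function.iterate_succ_apply] at h2
      exact h2
    have h1 : C.Over X (C.ft X) := by
      refine ⟨by omega, ?_⟩
      rw [show C.l X - C.l (C.ft X) = 1 by omega]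
      simp
    have e1 := C.star_step f X hXΓ hlΓ hftΓ h1
    have e1q := C.qq_step f X hXΓ hlΓ hftΓ h1
    have e2 := C.star_step (C.qq f Y hYΓ) X hXY hlY hftY h1
    have e2q := C.qq_step (C.qq f Y hYΓ) X hXY hlY hftY h1
    obtain ⟨ihs, ihq⟩ := ih (C.ft X) (by omega) hftY hftΓ
    obtain ⟨cs, cq⟩ := star_qq_congr C ihs (C.qq f (C.ft X) hftΓ)
      (C.qq (C.qq f Y hYΓ) (C.ft X) hftY) ihq X h1
    exact ⟨e1.trans (cs.trans e2.symm), e1q.trans (cq.trans e2q.symm)⟩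

/-- for `X ≥ Y ≥ Γ` and `f : Γ' → Γ`,
`f*(X) = q(f,Y)*(X)` and `q(f,X) = q(q(f,Y),X)`. -/
theorem stmt10 (C : CSystem) {Γ' Γ : C.Ob} (f : C.Hom Γ' Γ) (X Y : C.Ob)
    (hXY : C.Over X Y) (hYΓ : C.Over Y Γ) (hXΓ : C.Over X Γ) :
    C.star f X hXΓ = C.star (C.qq f Y hYΓ) X hXY ∧
    HEq (C.qq f X hXΓ) (C.qq (C.qq f Y hYΓ) X hXY) := by
  exact stmt10_aux C f Y hYΓ (C.l X - C.l Y) X (by have := hXY.1; omega) hXY hXΓ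
end

section
/- Let CC be a C-system and for Γ ∈ Ob define Ob_n(Γ) = {X | l(X) = l(Γ) + n and ft^n(X) = Γ}. Fix i > 0 and j ≥ 0, and let F : Ob_{≥i} → Ob be a function such that for all X with l(X) ≥ i, ft^j(F(X)) = ft^i(X), and for all f : Γ' → ft^i(X), f*(F(X)) = F(f*(X)). Then for every X ∈ Ob_{≥i} one has l(F(X)) = l(ft^i(X)) + j. -/
universe u v

namespace CSystem

lemma l_ft_iter (C : CSystem) (n : ℕ) : ∀ X : C.Ob, C.l (C.ft^[n] X) = C.l X - n := by
  induction n with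
  | zero => intro X; simp
  | succ n ih =>
    intro X
    rw [Function.iterate_succ_apply, ih, C.l_ft, Nat.sub_sub, Nat.add_comm]

lemma over_ft_iter (C : CSystem) (X : C.Ob) (i : ℕ) (h : i ≤ C.l X) :
    C.Over X (C.ft^[i] X) := by
  refine ⟨by rw [C.l_ft_iter]; omega, ?_⟩
  rw [C.l_ft_iter]
  congr 1
  omega

lemma star_spec (C : CSystem) : ∀ (n : ℕ) {Γ' Γ : C.Ob} (f : C.Hom Γ' Γ) (X : C.Ob)
    (h : C.Over X Γ), C.l X - C.l Γ = n →
    C.l (C.star f X h) = C.l Γ' + n ∧ C.ft^[n] (C.star f X h) = Γ' := by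
  intro n
  induction n with
  | zero =>
    intro Γ' Γ f X h hn
    have hle : C.l Γ ≤ C.l X := h.1
    have hXΓ : X = Γ := by
      have h2 := h.2
      rw [hn] at h2
      simpa using h2
    subst hXΓ
    rw [C.star_refl f h]
    simp
  | succ n ih =>
    intro Γ' Γ f X h hn
    have hle : C.l Γ ≤ C.l X := h.1
    have hlt : C.l Γ < C.l X := by omega
    have hftl : C.l (C.ft X) = C.l X - 1 := C.l_ft X
    have hft1 : C.Over (C.ft X) Γ := by
      refine ⟨by omega, ?_⟩
      have h2 := h.2
      rw [hn] at h2
      rw [Function.iterate_succ_apply] at h2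
      have : C.l (C.ft X) - C.l Γ = n := by omega
      rw [this]
      exact h2
    have h1 : C.Over X (C.ft X) := by
      refine ⟨by omega, ?_⟩
      have : C.l X - C.l (C.ft X) = 1 := by omega
      rw [this]
      simp
    have key := C.star_step f X h hlt hft1 h1
    obtain ⟨ihl, ihft⟩ := ih f (C.ft X) hft1 (by omega)
    have hstep : C.l X = C.l (C.ft X) + 1 := by omega
    have hl2 := C.l_star_step (C.qq f (C.ft X) hft1) X h1 hstep
    have hf2 := C.ft_star_step (C.qq f (C.ft X) hft1) X h1 hstep
    constructor
    · rw [key, hl2, ihl]; omega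
    · rw [key, Function.iterate_succ_apply, hf2, ihft]

end CSystem

/-- if `F : Ob_{≥i} → Ob` satisfies `ft^j(F(X)) = ft^i(X)` and
`f*(F(X)) = F(f*(X))` for all `f : Γ' → ft^i(X)`, then
`l(F(X)) = l(ft^i(X)) + j`. -/
theorem stmt19 (C : CSystem) (i j : ℕ) (hi : 0 < i) (F : C.Ob → C.Ob)
    (hft : ∀ X : C.Ob, i ≤ C.l X → C.ft^[j] (F X) = C.ft^[i] X)
    (hbc : ∀ X : C.Ob, i ≤ C.l X →
      ∀ {Γ' : C.Ob} (f : C.Hom Γ' (C.ft^[i] X))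
        (hFX : C.Over (F X) (C.ft^[i] X)) (hXX : C.Over X (C.ft^[i] X)),
        C.star f (F X) hFX = F (C.star f X hXX)) :
    ∀ X : C.Ob, i ≤ C.l X → C.l (F X) = C.l (C.ft^[i] X) + j := by
  -- First: the result whenever `l (ft^[i] X) > 0`.
  have main : ∀ X : C.Ob, i ≤ C.l X → 0 < C.l (C.ft^[i] X) →
      C.l (F X) = C.l (C.ft^[i] X) + j := by
    intro X hX hpos
    have h1 := hft X hX
    have h2 : C.l (C.ft^[j] (F X)) = C.l (F X) - j := C.l_ft_iter j (F X)
    rw [h1] at h2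
    omega
  intro X hX
  by_cases hpos : 0 < C.l (C.ft^[i] X)
  · exact main X hX hpos
  · -- here `ft^[i] X = pt`, so `l X = i`
    have hΓ0 : C.l (C.ft^[i] X) = 0 := by omega
    have hlX : C.l X = i := by have := C.l_ft_iter i X; omega
    have hΓpt : C.ft^[i] X = C.pt := C.pt_unique _ hΓ0
    have f : C.Hom X (C.ft^[i] X) := by rw [hΓpt]; exact C.toPt X
    have hXX : C.Over X (C.ft^[i] X) := C.over_ft_iter X i hX
    have hFX : C.Over (F X) (C.ft^[i] X) := by
      refine ⟨by omega, ?_⟩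
      rw [hΓ0, Nat.sub_zero]
      refine (C.pt_unique _ ?_).trans hΓpt.symm
      rw [C.l_ft_iter]
      omega
    have hbcX := hbc X hX f hFX hXX
    -- star f X has length l X + i and ft^[i] of it is X
    have hnX : C.l X - C.l (C.ft^[i] X) = i := by omega
    obtain ⟨hlY, hftY⟩ := C.star_spec i f X hXX hnX
    set Y := C.star f X hXX with hY
    have hiY : i ≤ C.l Y := by omega
    have hftiY : C.ft^[i] Y = X := hftY
    have hFY : C.l (F Y) = C.l (C.ft^[i] Y) + j := by
      apply main Y hiY
      rw [hftiY]
      omega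
    rw [hftiY] at hFY
    -- star f (F X) has length l X + (l (F X))
    have hnF : C.l (F X) - C.l (C.ft^[i] X) = C.l (F X) := by omega
    obtain ⟨hlFX, _⟩ := C.star_spec (C.l (F X)) f (F X) hFX hnF
    rw [hbcX] at hlFX
    omega
end
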